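/- arXiv:hep-th/0111053 — 8 statements merged into one kernel-verified Lean document; each statement's English description precedes it below -/
import Mathlib

section
/- Starting from generic initial values u1, u2, the five distinct values appearing in the type A2 Y-system are u1, u2, (u2+1)/u1, (u1+1)/u2, and (u1+u2+1)/(u1 u2), and each of these is a Laurent polynomial in u1, u2 with nonnegative integer coefficients. -/
noncomputable abbrev K0 : Type := FractionRing (MvPolynomial (Fin 2) ℚ)

noncomputable def u1 : K0 := algebraMap (MvPolynomial (Fin 2) ℚ) K0 (MvPolynomial.X 0)
noncomputable def u2 : K0 := algebraMap (MvPolynomial (Fin 2) ℚ) K0 (MvPolynomial.X 1)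

/-- `v` is a Laurent polynomial in `u₁, u₂` with nonnegative integer coefficients. -/
def IsNonnegLaurent (v : K0) : Prop :=
  ∃ (p : MvPolynomial (Fin 2) ℕ) (a b : ℕ),
    v = algebraMap (MvPolynomial (Fin 2) ℚ) K0
          (MvPolynomial.map (Nat.castRingHom ℚ) p) / (u1 ^ a * u2 ^ b)

lemma u1_ne : u1 ≠ 0 := by
  have inj := IsFractionRing.injective (MvPolynomial (Fin 2) ℚ) K0
  intro h
  exact MvPolynomial.X_ne_zero 0 (inj (by simp only [map_zero]; exact h))

lemma u2_ne : u2 ≠ 0 := by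
  have inj := IsFractionRing.injective (MvPolynomial (Fin 2) ℚ) K0
  intro h
  exact MvPolynomial.X_ne_zero 1 (inj (by simp only [map_zero]; exact h))

lemma nl1 : IsNonnegLaurent u1 :=
  ⟨MvPolynomial.X 0, 0, 0, by simp [u1, MvPolynomial.map_X]⟩

lemma nl2 : IsNonnegLaurent u2 :=
  ⟨MvPolynomial.X 1, 0, 0, by simp [u2, MvPolynomial.map_X]⟩

lemma nl3 : IsNonnegLaurent ((u2 + 1) / u1) :=
  ⟨MvPolynomial.X 1 + 1, 1, 0, by simp [u1, u2, MvPolynomial.map_X, map_add, map_one]⟩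

lemma nl4 : IsNonnegLaurent ((u1 + 1) / u2) :=
  ⟨MvPolynomial.X 0 + 1, 0, 1, by simp [u1, u2, MvPolynomial.map_X, map_add, map_one]⟩

lemma nl5 : IsNonnegLaurent ((u1 + u2 + 1) / (u1 * u2)) :=
  ⟨MvPolynomial.X 0 + MvPolynomial.X 1 + 1, 1, 1, by
    simp [u1, u2, MvPolynomial.map_X, map_add, map_one]⟩

set_option maxHeartbeats 1000000 in
theorem stmt2 (Y : ℤ → K0)
    (hY0 : Y 0 = u1) (hY1 : Y 1 = u2)
    (hne : ∀ t, Y t ≠ 0)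
    (hrec : ∀ t, Y (t + 1) * Y (t - 1) = Y t + 1) :
    Set.range Y =
      {u1, u2, (u2 + 1) / u1, (u1 + 1) / u2, (u1 + u2 + 1) / (u1 * u2)} ∧
    ∀ v ∈ Set.range Y, IsNonnegLaurent v := by
  have hu1 := u1_ne
  have hu2 := u2_ne
  have h2 : Y 2 = (u2 + 1) / u1 := by
    have h := hrec 1
    norm_num [hY0, hY1] at h
    rw [eq_div_iff hu1]; exact h
  have hs2 : u2 + 1 ≠ 0 := by
    have := hne 2; rw [h2] at this
    exact (div_ne_zero_iff.mp this).1
  have h3 : Y 3 = (u1 + u2 + 1) / (u1 * u2) := by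
    have h := hrec 2
    norm_num [hY1, h2] at h
    rw [eq_div_iff (mul_ne_zero hu1 hu2)]
    field_simp at h
    linear_combination h
  have hs3 : u1 + u2 + 1 ≠ 0 := by
    have := hne 3; rw [h3] at this
    exact (div_ne_zero_iff.mp this).1
  have h4 : Y 4 = (u1 + 1) / u2 := by
    have h := hrec 3
    norm_num [h2, h3] at h
    field_simp at h
    rw [eq_div_iff hu2]
    have c1 := mul_right_cancel₀ hu1
      (show (Y 4 * u2 * (u2 + 1)) * u1 = ((u1 + 1) * (u2 + 1)) * u1 by linear_combination u1 * h)
    exact mul_right_cancel₀ hs2 c1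
  have hs4 : u1 + 1 ≠ 0 := by
    have := hne 4; rw [h4] at this
    exact (div_ne_zero_iff.mp this).1
  have h5 : Y 5 = u1 := by
    have h := hrec 4
    norm_num [h3, h4] at h
    field_simp at h
    have c1 := mul_right_cancel₀ hu2
      (show (Y 5 * (u1 + u2 + 1)) * u2 = (u1 * (u1 + u2 + 1)) * u2 by linear_combination u2 * h)
    exact mul_right_cancel₀ hs3 c1
  have h6 : Y 6 = u2 := by
    have h := hrec 5
    norm_num [h4, h5] at h
    field_simp at h
    refine mul_right_cancel₀ hs4 ?_
    linear_combination (u1 + 1) * h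
  have main : ∀ t : ℤ, Y (t + 5) = Y t ∧ Y (t + 6) = Y (t + 1) := by
    intro t
    induction t using Int.induction_on with
    | zero => exact ⟨by norm_num [h5, hY0], by norm_num [h6, hY1]⟩
    | succ k ih =>
      obtain ⟨ih1, ih2⟩ := ih
      constructor
      · have e : (k : ℤ) + 1 + 5 = k + 6 := by ring
        rw [e, ih2]
      · have hA := hrec ((k : ℤ) + 6)
        have hB := hrec ((k : ℤ) + 1)
        have e1 : (k : ℤ) + 6 + 1 = k + 1 + 6 := by ring
        have e2 : (k : ℤ) + 6 - 1 = k + 5 := by ring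
        have e3 : (k : ℤ) + 1 - 1 = k := by ring
        rw [e1, e2, ih1, ih2] at hA
        rw [e3] at hB
        have hc : Y ((k : ℤ) + 1 + 6) * Y k = Y ((k:ℤ) + 1 + 1) * Y k := hA.trans hB.symm
        exact mul_right_cancel₀ (hne k) hc
    | pred k ih =>
      obtain ⟨ih1, ih2⟩ := ih
      constructor
      · have hA := hrec (-(k : ℤ) + 5)
        have hB := hrec (-(k : ℤ))
        have e1 : -(k : ℤ) + 5 + 1 = -k + 6 := by ring
        have e2 : -(k : ℤ) + 5 - 1 = -k + 4 := by ring
        have e3 : -(k : ℤ) + 6 = -k + 1 + 5 := by ring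
        rw [e1, e2, ih1] at hA
        rw [show -(k:ℤ) + 6 = -(k:ℤ) + 6 from rfl] at hA
        rw [ih2] at hA
        -- hA : Y (-k + 1) * Y (-k + 4) = Y (-k) + 1
        -- hB : Y (-k + 1) * Y (-k - 1) = Y (-k) + 1
        have hc := mul_left_cancel₀ (hne (-(k : ℤ) + 1)) (hA.trans hB.symm)
        have e : -(k : ℤ) - 1 + 5 = -k + 4 := by ring
        rw [e]; exact hc
      · have e : -(k : ℤ) - 1 + 6 = -k + 5 := by ring
        have e' : -(k : ℤ) - 1 + 1 = -k := by ring
        rw [e, e', ih1]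
  have hper : ∀ t : ℤ, Y (t + 5) = Y t := fun t => (main t).1
  have hshift : ∀ (n : ℤ) (t : ℤ), Y (t + 5 * n) = Y t := by
    intro n
    induction n using Int.induction_on with
    | zero => intro t; norm_num
    | succ k ih =>
      intro t
      have e : t + 5 * ((k : ℤ) + 1) = t + 5 * k + 5 := by ring
      rw [e, hper, ih]
    | pred k ih =>
      intro t
      have h := hper (t + 5 * (-(k : ℤ) - 1))
      have e : t + 5 * (-(k : ℤ) - 1) + 5 = t + 5 * (-(k : ℤ)) := by ring
      rw [e] at h
      rw [← h, ih]
  have hmod : ∀ t : ℤ, Y t = Y (t % 5) := by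
    intro t
    have e : t = t % 5 + 5 * (t / 5) := (Int.emod_add_mul_ediv t 5).symm
    calc Y t = Y (t % 5 + 5 * (t / 5)) := by rw [← e]
      _ = Y (t % 5) := hshift _ _
  have hset : Set.range Y =
      {u1, u2, (u2 + 1) / u1, (u1 + 1) / u2, (u1 + u2 + 1) / (u1 * u2)} := by
    ext x
    simp only [Set.mem_range, Set.mem_insert_iff, Set.mem_singleton_iff]
    constructor
    · rintro ⟨t, rfl⟩
      rw [hmod t]
      have h0 : 0 ≤ t % 5 := Int.emod_nonneg t (by norm_num)
      have h5' : t % 5 < 5 := Int.emod_lt_of_pos t (by norm_num)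
      interval_cases h : (t % 5) <;>
        simp [hY0, hY1, h2, h3, h4]
    · rintro (rfl | rfl | rfl | rfl | rfl)
      exacts [⟨0, hY0⟩, ⟨1, hY1⟩, ⟨2, h2⟩, ⟨4, h4⟩, ⟨3, h3⟩]
  refine ⟨hset, ?_⟩
  intro v hv
  rw [hset] at hv
  simp only [Set.mem_insert_iff, Set.mem_singleton_iff] at hv
  rcases hv with rfl | rfl | rfl | rfl | rfl
  exacts [nl1, nl2, nl3, nl4, nl5]
end

section
/- For α in Φ_{≥−1} = Φ_{>0} ∪ (−Π), the piecewise-linear map σ_i satisfies: σ_i(α) = α if α = −α_j with j ≠ i, and σ_i(α) = s_i(α) otherwise; consequently σ_i preserves the set Φ_{≥−1}. -/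
/-- The piecewise-linear map σᵢ on the root lattice ℤⁿ. -/
def sigmaMap (n : ℕ) (A : Matrix (Fin n) (Fin n) ℤ) (i : Fin n)
    (α : Fin n → ℤ) : Fin n → ℤ :=
  fun k => if k = i then
    -α i - ∑ j ∈ Finset.univ.erase i, A i j * max (α j) 0
  else α k

/-- The linear simple reflection sᵢ on the root lattice ℤⁿ. -/
def sMap (n : ℕ) (A : Matrix (Fin n) (Fin n) ℤ) (i : Fin n)
    (α : Fin n → ℤ) : Fin n → ℤ :=
  fun k => if k = i then
    -α i - ∑ j ∈ Finset.univ.erase i, A i j * α j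
  else α k

/-- The set of almost positive roots Φ_{≥−1} = Φ_{>0} ∪ (−Π), where `P` is the
set of (coordinate vectors of) positive roots. -/
def almostPos (n : ℕ) (P : Set (Fin n → ℤ)) : Set (Fin n → ℤ) :=
  P ∪ {x | ∃ j : Fin n, x = -Pi.single j 1}


/-! σᵢ agrees with the linear reflection sᵢ on vectors whose coordinates off `i` are nonnegative,
and on vectors whose coordinates off `i` are nonpositive it only negates the `i`-th coordinate.
Every positive root lies in the first class and every negative simple root in the second, so the
theorem follows from the fact that sᵢ permutes the positive roots other than αᵢ. -/

section SigmaMap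

variable {n : ℕ} (A : Matrix (Fin n) (Fin n) ℤ) {i : Fin n} {α : Fin n → ℤ}

theorem sigmaMap_eq_sMap (h : ∀ j, j ≠ i → 0 ≤ α j) : sigmaMap n A i α = sMap n A i α := by
  ext k
  simp only [sigmaMap, sMap]
  split_ifs
  · congr 1
    exact Finset.sum_congr rfl fun j hj => by rw [max_eq_left (h j (Finset.ne_of_mem_erase hj))]
  · rfl

theorem sigmaMap_eq_update (h : ∀ j, j ≠ i → α j ≤ 0) :
    sigmaMap n A i α = Function.update α i (-α i) := by
  ext k
  rcases eq_or_ne k i with rfl | hk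
  · have hsum : ∑ j ∈ Finset.univ.erase k, A k j * max (α j) 0 = 0 :=
      Finset.sum_eq_zero fun j hj => by rw [max_eq_right (h j (Finset.ne_of_mem_erase hj)), mul_zero]
    simp [sigmaMap, hsum]
  · simp [sigmaMap, hk]

theorem sigmaMap_neg_single (j : Fin n) :
    sigmaMap n A i (-Pi.single j 1) = if j = i then Pi.single i 1 else -Pi.single j 1 := by
  have h : ∀ k, k ≠ i → (-Pi.single j 1 : Fin n → ℤ) k ≤ 0 := fun k _ => by
    simp only [Pi.neg_apply, Pi.single_apply]
    split_ifs <;> norm_num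
  rw [sigmaMap_eq_update A h]
  ext k
  split_ifs with hji
  · subst hji
    by_cases hk : k = j <;> simp [hk]
  · by_cases hk : k = i <;> simp [hk, Ne.symm hji]

theorem sigmaMap_single_self : sigmaMap n A i (Pi.single i 1) = -Pi.single i 1 := by
  have h : ∀ k, k ≠ i → (Pi.single i 1 : Fin n → ℤ) k ≤ 0 := fun k hk => by simp [hk]
  rw [sigmaMap_eq_update A h]
  ext k
  by_cases hk : k = i <;> simp [hk]

end SigmaMap

theorem stmt5_general (n : ℕ) (A : Matrix (Fin n) (Fin n) ℤ)
    (P : Set (Fin n → ℤ))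
    -- positive roots have nonnegative coordinates
    (hpos : ∀ α ∈ P, ∀ k, 0 ≤ α k)
    -- simple roots are positive roots
    (hsimple : ∀ j : Fin n, (Pi.single j 1 : Fin n → ℤ) ∈ P)
    -- sᵢ permutes the positive roots other than αᵢ, and sᵢ(αᵢ) = −αᵢ
    (hrefl : ∀ i : Fin n, ∀ α ∈ P, α ≠ Pi.single i 1 → sMap n A i α ∈ P)
    (i : Fin n) :
    (∀ α ∈ almostPos n P, (∃ j : Fin n, j ≠ i ∧ α = -Pi.single j 1) →
        sigmaMap n A i α = α) ∧
    (∀ α ∈ almostPos n P, (¬ ∃ j : Fin n, j ≠ i ∧ α = -Pi.single j 1) →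
        sigmaMap n A i α = sMap n A i α) ∧
    (∀ α ∈ almostPos n P, sigmaMap n A i α ∈ almostPos n P) := by
  refine ⟨?_, ?_, ?_⟩
  · rintro _ _ ⟨j, hj, rfl⟩
    rw [sigmaMap_neg_single, if_neg hj]
  · rintro α (hP | ⟨j, rfl⟩) hne
    · exact sigmaMap_eq_sMap A fun k _ => hpos α hP k
    · obtain rfl : j = i := by_contra fun hj => hne ⟨j, hj, rfl⟩
      exact sigmaMap_eq_sMap A fun k hk => by simp [hk]
  · rintro α (hP | ⟨j, rfl⟩)
    · by_cases hα : α = Pi.single i 1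
      · subst hα
        rw [sigmaMap_single_self]
        exact Or.inr ⟨i, rfl⟩
      · rw [sigmaMap_eq_sMap A fun k _ => hpos α hP k]
        exact Or.inl (hrefl i α hP hα)
    · rw [sigmaMap_neg_single]
      split_ifs with hj
      · exact Or.inl (hsimple i)
      · exact Or.inr ⟨j, rfl⟩

theorem stmt5 (n : ℕ) (A : Matrix (Fin n) (Fin n) ℤ)
    (hdiag : ∀ i, A i i = 2) (hoff : ∀ i j, i ≠ j → A i j ≤ 0)
    (P : Set (Fin n → ℤ))
    -- positive roots have nonnegative coordinates
    (hpos : ∀ α ∈ P, ∀ k, 0 ≤ α k)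
    -- simple roots are positive roots
    (hsimple : ∀ j : Fin n, (Pi.single j 1 : Fin n → ℤ) ∈ P)
    -- sᵢ permutes the positive roots other than αᵢ, and sᵢ(αᵢ) = −αᵢ
    (hrefl : ∀ i : Fin n, ∀ α ∈ P, α ≠ Pi.single i 1 → sMap n A i α ∈ P)
    (i : Fin n) :
    (∀ α ∈ almostPos n P, (∃ j : Fin n, j ≠ i ∧ α = -Pi.single j 1) →
        sigmaMap n A i α = α) ∧
    (∀ α ∈ almostPos n P, (¬ ∃ j : Fin n, j ≠ i ∧ α = -Pi.single j 1) →
        sigmaMap n A i α = sMap n A i α) ∧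
    (∀ α ∈ almostPos n P, sigmaMap n A i α ∈ almostPos n P) :=
  stmt5_general n A P hpos hsimple hrefl i
end

section
/- The number of clusters of type A_n, defined as the sequence a_0 = 1 and a_n = ((n+3)/(2n))·Σ_{i=1}^{n} a_{i−1} a_{n−i} for n ≥ 1, equals the Catalan number c_{n+1} = (1/(n+2))·binom(2n+2, n+1) for all n ≥ 0. -/
open Finset

lemma my_catalan_pos (n : ℕ) : 0 < catalan n := by
  have h := succ_mul_catalan_eq_centralBinom n
  have hb := Nat.centralBinom_pos n
  rcases Nat.eq_zero_or_pos (catalan n) with h0 | h0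
  · rw [h0, Nat.mul_zero] at h; omega
  · exact h0

lemma catalan_key (n : ℕ) :
    catalan (n+2) = 2 * catalan (n+1) +
      ∑ i ∈ Finset.Icc 1 n, catalan i * catalan (n+1-i) := by
  rw [show n+2 = (n+1)+1 from rfl, catalan_succ' (n+1),
    Finset.Nat.sum_antidiagonal_eq_sum_range_succ_mk,
    Finset.sum_range_succ, Finset.sum_range_succ',
    ← Finset.Ico_add_one_right_eq_Icc 1 n, Finset.sum_Ico_eq_sum_range]
  simp only [Nat.sub_self, catalan_zero, mul_one, one_mul, Nat.sub_zero, Nat.add_sub_cancel]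
  have : ∀ i ∈ Finset.range (n+1-1), catalan (1+i) * catalan (n+1-(1+i)) = catalan (i+1) * catalan (n+1-(i+1)) := by
    intro i hi; rw [add_comm 1 i]
  rw [show n+1-1 = n from rfl] at this
  rw [Finset.sum_congr rfl this]
  ring

lemma catalan_ratio (n : ℕ) :
    (n+3) * catalan (n+2) = (4*n+6) * catalan (n+1) := by
  have h1 := succ_mul_catalan_eq_centralBinom (n+2)
  have h2 := succ_mul_catalan_eq_centralBinom (n+1)
  have h3 := Nat.succ_mul_centralBinom_succ (n+1)
  have key : (n+2) * ((n+3) * catalan (n+2)) = (n+2) * ((4*n+6) * catalan (n+1)) := by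
    rw [h1]
    nlinarith [h2, h3]
  exact Nat.eq_of_mul_eq_mul_left (by omega) key

theorem stmt8 (a : ℕ → ℚ) (h0 : a 0 = 1)
    (hrec : ∀ n : ℕ, 1 ≤ n →
      a n = ((n + 3) / (2 * n)) * ∑ i ∈ Finset.Icc 1 n, a (i - 1) * a (n - i)) :
    ∀ n : ℕ, a n = (1 / (n + 2)) * (Nat.choose (2 * n + 2) (n + 1) : ℚ) ∧
      ∃ m : ℕ, 0 < m ∧ a n = m := by
  have key : ∀ n : ℕ, a n = (catalan (n+1) : ℚ) := by
    intro n
    induction n using Nat.strong_induction_on with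
    | _ n ih =>
      match n with
      | 0 => simpa [catalan_one] using h0
      | (m+1) =>
        rw [hrec (m+1) (by omega)]
        have hsum : ∑ i ∈ Finset.Icc 1 (m+1), a (i-1) * a (m+1-i)
            = ((∑ i ∈ Finset.Icc 1 (m+1), catalan i * catalan (m+2-i) : ℕ) : ℚ) := by
          push_cast
          apply Finset.sum_congr rfl
          intro i hi
          simp only [Finset.mem_Icc] at hi
          rw [ih (i-1) (by omega), ih (m+1-i) (by omega),
            show i-1+1 = i by omega, show m+1-i+1 = m+2-i by omega]
        rw [hsum]
        have hk := catalan_key (m+1)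
        have hkq : ((∑ i ∈ Finset.Icc 1 (m+1), catalan i * catalan (m+2-i) : ℕ) : ℚ)
            = (catalan (m+3) : ℚ) - 2 * (catalan (m+2) : ℚ) := by
          have : (catalan (m+3) : ℚ) = 2 * (catalan (m+2) : ℚ) +
              ((∑ i ∈ Finset.Icc 1 (m+1), catalan i * catalan (m+2-i) : ℕ) : ℚ) := by
            exact_mod_cast congrArg (Nat.cast : ℕ → ℚ) hk
          linarith
        rw [hkq]
        have hr : ((m:ℚ)+1+3) * (catalan (m+3) : ℚ) = (4*(m+1)+6) * (catalan (m+2) : ℚ) := by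
          have := catalan_ratio (m+1)
          exact_mod_cast congrArg (Nat.cast : ℕ → ℚ) this
        have hne : (2 : ℚ) * ((m:ℚ)+1) ≠ 0 := by positivity
        push_cast at hr ⊢
        field_simp
        ring_nf
        ring_nf at hr
        linarith
  intro n
  have hc : ((n:ℚ)+2) * (catalan (n+1) : ℚ) = (Nat.choose (2*n+2) (n+1) : ℚ) := by
    have := succ_mul_catalan_eq_centralBinom (n+1)
    have h2 : (n+2) * catalan (n+1) = Nat.choose (2*n+2) (n+1) := by
      rw [show n+1+1 = n+2 from rfl] at this
      rw [this, Nat.centralBinom, show 2*(n+1) = 2*n+2 from by ring]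
    exact_mod_cast congrArg (Nat.cast : ℕ → ℚ) h2
  constructor
  · rw [key n]
    have hne : ((n:ℚ)+2) ≠ 0 := by positivity
    field_simp
    linarith [hc]
  · exact ⟨catalan (n+1), my_catalan_pos (n+1), key n⟩
end

section
/- The alternating-sum inclusion-exclusion over subsets of {1,…,n}: Σ_{J ⊆ [n]} (−1)^{n−|J|} c_J = c_n, where c_J is the product of Catalan numbers c_{|J_i|+1} over the connected components (maximal runs of consecutive integers) J_i of J. Equivalently, Σ_{k=0}^{n} (−1)^k Σ_{j_0+⋯+j_k = n+1, j_i > 0} c_{j_0}⋯c_{j_k} = c_n. -/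
/-!
With `C = Σ cₖ tᵏ` and `P = C - 1`, the inner sum over compositions of `n + 1` into `k + 1`
positive parts is the coefficient of `t^(n+1)` in `P^(k+1)`. Since `P = tC²` and `1 + P = C`,
multiplying the geometric sum identity `(1 + P) Σ_{k<N} (-P)ᵏ = 1 - (-P)^N` by `tC` gives
`Σ_{k<N} (-1)ᵏ P^(k+1) = tC - t^(N+1) (-1)^N C^(2N+1)`. For `N = n + 1` the error term has
order `t^(n+2)`, so the coefficient of `t^(n+1)` is that of `tC`, namely `cₙ`.
-/

open Finset PowerSeries

theorem Finset.Nat.sum_antidiagonalTuple_succ {M : Type*} [AddCommMonoid M] (k n : ℕ)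
    (f : (Fin (k + 1) → ℕ) → M) :
    ∑ x ∈ antidiagonalTuple (k + 1) n, f x =
      ∑ p ∈ antidiagonal n, ∑ y ∈ antidiagonalTuple k p.2, f (Fin.cons p.1 y) := by
  change ((List.Nat.antidiagonalTuple (k + 1) n).map f).sum =
    ((List.Nat.antidiagonal n).map fun p =>
      ((List.Nat.antidiagonalTuple k p.2).map fun y => f (Fin.cons p.1 y)).sum).sum
  simp [List.Nat.antidiagonalTuple, List.flatMap_def, List.map_flatten, List.sum_flatten,
    Function.comp_def]

theorem PowerSeries.coeff_pow_eq_sum_antidiagonalTuple {R : Type*} [CommSemiring R]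
    (φ : R⟦X⟧) (k n : ℕ) :
    coeff n (φ ^ k) = ∑ j ∈ Finset.Nat.antidiagonalTuple k n, ∏ i, coeff (j i) φ := by
  induction k generalizing n with
  | zero => cases n <;> simp [coeff_one]
  | succ k ih =>
    simp [pow_succ', coeff_mul, ih, Finset.Nat.sum_antidiagonalTuple_succ, mul_sum,
      Fin.prod_univ_succ]

theorem sum_neg_one_pow_mul_sub_one_pow {R : Type*} [CommRing R] {c x : R}
    (hc : c = 1 + x * c ^ 2) (N : ℕ) :
    ∑ k ∈ range N, (-1 : R) ^ k * (c - 1) ^ (k + 1) =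
      x * c - x ^ (N + 1) * ((-1) ^ N * c ^ (2 * N + 1)) := by
  have hgeom := mul_neg_geom_sum (-(c - 1)) N
  rw [sub_neg_eq_add, add_sub_cancel] at hgeom
  calc ∑ k ∈ range N, (-1 : R) ^ k * (c - 1) ^ (k + 1)
      = (c - 1) * ∑ k ∈ range N, (-(c - 1)) ^ k := by
        rw [mul_sum]
        refine sum_congr rfl fun k _ => ?_
        rw [neg_pow (c - 1)]
        ring
    _ = x * c * (c * ∑ k ∈ range N, (-(c - 1)) ^ k) := by
        rw [sub_eq_of_eq_add' hc]
        ring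
    _ = x * c - x ^ (N + 1) * ((-1) ^ N * c ^ (2 * N + 1)) := by
        rw [hgeom, sub_eq_of_eq_add' hc]
        ring

section CatalanSeries

variable (R : Type*) [CommRing R]

theorem map_catalanSeries_eq_one_add_X_mul_sq :
    catalanSeries.map (Nat.castRingHom R) =
      1 + X * catalanSeries.map (Nat.castRingHom R) ^ 2 := by
  conv_lhs => rw [← catalanSeries_sq_mul_X_add_one]
  simp only [map_add, map_mul, map_pow, map_one, map_X]
  ring

theorem coeff_map_catalanSeries_sub_one (m : ℕ) :
    coeff m (catalanSeries.map (Nat.castRingHom R) - 1) =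
      if 1 ≤ m then (catalan m : R) else 0 := by
  rcases Nat.eq_zero_or_pos m with rfl | hm
  · simp only [map_sub, coeff_map, catalanSeries_coeff, coeff_one]
    simp
  · simp [catalanSeries_coeff, coeff_one, hm.ne']

theorem coeff_map_catalanSeries_sub_one_pow (k m : ℕ) :
    coeff m ((catalanSeries.map (Nat.castRingHom R) - 1) ^ k) =
      ∑ j ∈ (Finset.Nat.antidiagonalTuple k m).filter (fun j => ∀ i, 1 ≤ j i),
        ∏ i, (catalan (j i) : R) := by
  simp only [coeff_pow_eq_sum_antidiagonalTuple, coeff_map_catalanSeries_sub_one,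
    Fintype.prod_ite_zero, sum_filter]
  congr!

end CatalanSeries

theorem stmt9 (n : ℕ) :
    ∑ k ∈ Finset.range (n + 1), (-1 : ℤ) ^ k *
      ∑ j ∈ (Finset.Nat.antidiagonalTuple (k + 1) (n + 1)).filter
          (fun j => ∀ i, 1 ≤ j i),
        ∏ i, (catalan (j i) : ℤ) = (catalan n : ℤ) := by
  simp_rw [← coeff_map_catalanSeries_sub_one_pow, ← coeff_C_mul, ← map_sum, map_pow, map_neg,
    map_one, sum_neg_one_pow_mul_sub_one_pow (map_catalanSeries_eq_one_add_X_mul_sq ℤ),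
    map_sub, coeff_succ_X_mul, coeff_X_pow_mul']
  simp [catalanSeries_coeff]
end

section
/- Under the identification of almost positive roots of type A_n with diagonals of a convex (n+3)-gon, two almost positive roots are compatible (compatibility degree zero) if and only if the corresponding diagonals do not cross; consequently, maximal collections of pairwise non-crossing diagonals (clusters) all have exactly n elements, i.e., every triangulation of a convex (n+3)-gon by non-crossing diagonals uses exactly n diagonals. -/
/-- `x` lies strictly inside the counterclockwise arc from `a` to `b`. -/
def ArcBtw (m : ℕ) (a b x : ZMod m) : Prop := x ≠ a ∧ (x - a).val < (b - a).val

/-- `e` is a diagonal of the convex `m`-gon with vertices `ZMod m`. -/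
def IsDiag (m : ℕ) (e : Finset (ZMod m)) : Prop :=
  e.card = 2 ∧ ∀ a ∈ e, ∀ b ∈ e, b - a ≠ 1

/-- The diagonals `e` and `f` cross (intersect in the interior of the polygon). -/
def Cross (m : ℕ) (e f : Finset (ZMod m)) : Prop :=
  ∃ a b c d : ZMod m, e = {a, b} ∧ f = {c, d} ∧ ArcBtw m a b c ∧ ArcBtw m b a d

set_option linter.unusedSectionVars false

section Basics
variable {m : ℕ} [NeZero m]

lemma valSub (p q : ZMod m) :
    (q.val ≤ p.val ∧ (p - q).val = p.val - q.val) ∨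
    (p.val < q.val ∧ (p - q).val = p.val + m - q.val) := by
  rcases le_or_gt q.val p.val with h | h
  · exact Or.inl ⟨h, ZMod.val_sub h⟩
  · refine Or.inr ⟨h, ?_⟩
    have hq : q ≠ 0 := by
      intro hq0; rw [hq0, ZMod.val_zero] at h; omega
    rw [sub_eq_add_neg, ZMod.val_add, ZMod.neg_val, if_neg hq]
    have hp := ZMod.val_lt p
    have hqlt := ZMod.val_lt q
    rw [Nat.mod_eq_of_lt (by omega)]
    omega

lemma coordSub (a x y : ZMod m) :
    ((y - a).val ≤ (x - a).val ∧ (x - y).val = (x - a).val - (y - a).val) ∨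
    ((x - a).val < (y - a).val ∧ (x - y).val = (x - a).val + m - (y - a).val) := by
  have h := valSub (x - a) (y - a)
  rwa [sub_sub_sub_cancel_right] at h

lemma coord_eq_iff (a x y : ZMod m) : (x - a).val = (y - a).val ↔ x = y := by
  constructor
  · intro h; have := ZMod.val_injective m h; rwa [sub_left_inj] at this
  · intro h; rw [h]

lemma coord_zero (a x : ZMod m) : (x - a).val = 0 ↔ x = a := by
  rw [ZMod.val_eq_zero, sub_eq_zero]

lemma coord_self (a : ZMod m) : (a - a).val = 0 := by rw [sub_self, ZMod.val_zero]

lemma pair_eq {α : Type*} [DecidableEq α] {a b u v : α} (h : ({a, b} : Finset α) = {u, v}) :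
    (a = u ∧ b = v) ∨ (a = v ∧ b = u) := by
  have ha : a ∈ ({u, v} : Finset α) := h ▸ (by simp)
  have hb : b ∈ ({u, v} : Finset α) := h ▸ (by simp)
  have hu : u ∈ ({a, b} : Finset α) := h ▸ (by simp)
  have hv : v ∈ ({a, b} : Finset α) := h ▸ (by simp)
  simp only [Finset.mem_insert, Finset.mem_singleton] at ha hb hu hv
  tauto

lemma cross_symm {e f : Finset (ZMod m)} (h : Cross m e f) : Cross m f e := by
  obtain ⟨a, b, c, d, he, hf, ⟨hca, hc⟩, ⟨hdb, hd⟩⟩ := h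
  have hbm := ZMod.val_lt (b - a)
  have hdm := ZMod.val_lt (d - a)
  have hcm := ZMod.val_lt (c - a)
  have hDc : (c - a).val ≠ 0 := fun h' => hca ((coord_zero a c).mp h')
  have hab : (a - b).val = m - (b - a).val := by
    rcases coordSub a a b with ⟨h1, h2⟩ | ⟨h1, h2⟩ <;> rw [coord_self] at h1 h2 <;> omega
  have hDd : (b - a).val < (d - a).val := by
    rcases coordSub a d b with ⟨h1, h2⟩ | ⟨h1, h2⟩
    · rcases lt_or_eq_of_le h1 with h3 | h3
      · exact h3
      · exact absurd ((coord_eq_iff a d b).mp h3.symm) hdb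
    · omega
  refine ⟨c, d, b, a, hf, by rw [he, Finset.pair_comm], ⟨?_, ?_⟩, ⟨?_, ?_⟩⟩
  · intro h'; rw [← coord_eq_iff a] at h'; omega
  · rcases coordSub a b c with ⟨h1, h2⟩ | ⟨h1, h2⟩ <;> rcases coordSub a d c with ⟨h3, h4⟩ | ⟨h3, h4⟩ <;> omega
  · intro h'; rw [← coord_eq_iff a] at h'; rw [coord_self] at h'; omega
  · have h5 : (a - d).val = m - (d - a).val := by
      rcases coordSub a a d with ⟨h1, h2⟩ | ⟨h1, h2⟩ <;> rw [coord_self] at h1 h2 <;> omega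
    rcases coordSub a c d with ⟨h3, h4⟩ | ⟨h3, h4⟩ <;> omega

end Basics

section two
variable {m : ℕ} [NeZero m]

/-- the embedding of the `m`-gon into the `(m+1)`-gon (skipping top vertex). -/
def emb (m : ℕ) : ZMod m → ZMod (m + 1) := fun x => (x.val : ZMod (m + 1))

lemma emb_val (x : ZMod m) : (emb m x).val = x.val :=
  ZMod.val_natCast_of_lt (lt_trans (ZMod.val_lt x) (Nat.lt_succ_self m))

lemma emb_inj : Function.Injective (emb m) := fun x y h =>
  ZMod.val_injective m (by rw [← emb_val x, ← emb_val y, h])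

lemma emb_val_lt (x : ZMod m) : (emb m x).val < m := by
  rw [emb_val]; exact ZMod.val_lt x

lemma one_val_eq (hm : 2 ≤ m) : (1 : ZMod m).val = 1 := by
  have : ((1 : ℕ) : ZMod m).val = 1 % m := ZMod.val_natCast m 1
  rwa [Nat.cast_one, Nat.mod_eq_of_lt (by omega)] at this

lemma adj_iff (hm : 2 ≤ m) (a b : ZMod m) : b - a = 1 ↔ (b - a).val = 1 := by
  constructor
  · intro h; rw [h]; exact one_val_eq hm
  · intro h; have := one_val_eq (m := m) hm
    exact ZMod.val_injective m (by omega)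

lemma arc_emb (a b x : ZMod m) :
    ArcBtw m a b x ↔ ArcBtw (m + 1) (emb m a) (emb m b) (emb m x) := by
  have hx := ZMod.val_lt x
  have ha := ZMod.val_lt a
  have hb := ZMod.val_lt b
  have e1 := valSub x a
  have e2 := valSub b a
  have e3 := valSub (emb m x) (emb m a)
  have e4 := valSub (emb m b) (emb m a)
  rw [emb_val, emb_val] at e3 e4
  unfold ArcBtw
  rw [ne_eq, ne_eq, emb_inj.eq_iff]
  constructor <;> rintro ⟨h1, h2⟩ <;> refine ⟨h1, ?_⟩ <;>
    rcases e1 with ⟨f1, g1⟩ | ⟨f1, g1⟩ <;> rcases e2 with ⟨f2, g2⟩ | ⟨f2, g2⟩ <;>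
    rcases e3 with ⟨f3, g3⟩ | ⟨f3, g3⟩ <;> rcases e4 with ⟨f4, g4⟩ | ⟨f4, g4⟩ <;> omega

lemma image_pair {α β : Type*} [DecidableEq α] [DecidableEq β] (f : α → β) (a b : α) :
    ({a, b} : Finset α).image f = {f a, f b} := by
  simp

lemma cross_emb (g h : Finset (ZMod m)) :
    Cross m g h ↔ Cross (m + 1) (g.image (emb m)) (h.image (emb m)) := by
  constructor
  · rintro ⟨a, b, c, d, hg, hh, h1, h2⟩
    exact ⟨emb m a, emb m b, emb m c, emb m d,
      by rw [hg, image_pair], by rw [hh, image_pair],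
      (arc_emb _ _ _).mp h1, (arc_emb _ _ _).mp h2⟩
  · rintro ⟨a', b', c', d', hg, hh, h1, h2⟩
    have ha : a' ∈ g.image (emb m) := by rw [hg]; simp
    have hb : b' ∈ g.image (emb m) := by rw [hg]; simp
    have hc : c' ∈ h.image (emb m) := by rw [hh]; simp
    have hd : d' ∈ h.image (emb m) := by rw [hh]; simp
    obtain ⟨a, -, rfl⟩ := Finset.mem_image.mp ha
    obtain ⟨b, -, rfl⟩ := Finset.mem_image.mp hb
    obtain ⟨c, -, rfl⟩ := Finset.mem_image.mp hc
    obtain ⟨d, -, rfl⟩ := Finset.mem_image.mp hd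
    refine ⟨a, b, c, d, ?_, ?_, (arc_emb _ _ _).mpr h1, (arc_emb _ _ _).mpr h2⟩
    · apply Finset.image_injective emb_inj; rw [hg, image_pair]
    · apply Finset.image_injective emb_inj; rw [hh, image_pair]

lemma diag_up (hm : 2 ≤ m) (g : Finset (ZMod m)) (hg : IsDiag m g) :
    IsDiag (m + 1) (g.image (emb m)) := by
  refine ⟨by rw [Finset.card_image_of_injective g emb_inj]; exact hg.1, ?_⟩
  intro a' ha' b' hb'
  obtain ⟨a, ha, rfl⟩ := Finset.mem_image.mp ha'
  obtain ⟨b, hb, rfl⟩ := Finset.mem_image.mp hb'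
  intro hcon
  rw [adj_iff (by omega)] at hcon
  have e3 := valSub (emb m b) (emb m a)
  rw [emb_val, emb_val] at e3
  have ha2 := ZMod.val_lt a
  have hb2 := ZMod.val_lt b
  have e1 := valSub b a
  have : (b - a).val = 1 := by
    rcases e1 with ⟨f1, g1⟩ | ⟨f1, g1⟩ <;> rcases e3 with ⟨f3, g3⟩ | ⟨f3, g3⟩ <;> omega
  exact hg.2 a ha b hb ((adj_iff hm a b).mpr this)



def down (m : ℕ) : ZMod (m + 1) → ZMod m := fun x => (x.val : ZMod m)

lemma negOne_val (hm : 2 ≤ m) : (-1 : ZMod m).val = m - 1 := by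
  have h1 : (1 : ZMod m) ≠ 0 := by
    intro h; have := one_val_eq (m := m) hm; rw [h, ZMod.val_zero] at this; omega
  rw [show (-1 : ZMod m) = -(1 : ZMod m) by ring, ZMod.neg_val, if_neg h1, one_val_eq hm]

lemma down_val (x : ZMod (m + 1)) (h : x.val ≠ m) : (down m x).val = x.val := by
  have := ZMod.val_lt x
  exact ZMod.val_natCast_of_lt (by omega)

lemma emb_down (x : ZMod (m + 1)) (h : x.val ≠ m) : emb m (down m x) = x :=
  ZMod.val_injective (m + 1) (by rw [emb_val, down_val x h])

lemma down_emb (x : ZMod m) : down m (emb m x) = x := by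
  have h : (emb m x).val ≠ m := by have := emb_val_lt x; omega
  exact ZMod.val_injective m (by rw [down_val _ h, emb_val])

lemma image_down_emb (f : Finset (ZMod (m + 1))) (h : ∀ x ∈ f, x.val ≠ m) :
    (f.image (down m)).image (emb m) = f := by
  rw [Finset.image_image]
  rw [show f = f.image id from (Finset.image_id).symm]
  rw [Finset.image_image]
  exact Finset.image_congr (fun x hx => by simp [Function.comp, emb_down x (h x (by simpa using hx))])

lemma down_injOn (f : Finset (ZMod (m + 1))) (h : ∀ x ∈ f, x.val ≠ m) :
    Set.InjOn (down m) f := by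
  intro x hx y hy hxy
  apply ZMod.val_injective (m + 1)
  rw [← down_val x (h x hx), ← down_val y (h y hy), hxy]

lemma diag_down (hm : 2 ≤ m) (f : Finset (ZMod (m + 1))) (hf : IsDiag (m + 1) f)
    (havoid : ∀ x ∈ f, x.val ≠ m) (hne : f ≠ {emb m (-1), 0}) :
    IsDiag m (f.image (down m)) := by
  constructor
  · rw [Finset.card_image_of_injOn (down_injOn f havoid)]; exact hf.1
  · intro a' ha' b' hb'
    obtain ⟨a, ha, rfl⟩ := Finset.mem_image.mp ha'
    obtain ⟨b, hb, rfl⟩ := Finset.mem_image.mp hb'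
    intro hcon
    rw [adj_iff hm] at hcon
    have da := down_val a (havoid a ha)
    have db := down_val b (havoid b hb)
    have ham := havoid a ha
    have hbm := havoid b hb
    have ha2 := ZMod.val_lt a
    have hb2 := ZMod.val_lt b
    have e1 := valSub (down m b) (down m a)
    rw [da, db] at e1
    rcases e1 with ⟨f1, g1⟩ | ⟨f1, g1⟩
    · -- non-wrap : adjacency upstairs
      have e2 := valSub b a
      have : (b - a).val = 1 := by rcases e2 with ⟨f2, g2⟩ | ⟨f2, g2⟩ <;> omega
      exact hf.2 a ha b hb ((adj_iff (by omega) a b).mpr this)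
    · -- wrap : f is the special pair
      have hav : a.val = m - 1 ∧ b.val = 0 := by omega
      have haa : a = emb m (-1) := by
        apply ZMod.val_injective (m + 1)
        rw [emb_val, negOne_val hm, hav.1]
      have hbb : b = 0 := by
        apply ZMod.val_injective (m + 1)
        rw [hav.2, ZMod.val_zero]
      apply hne
      have hab : a ≠ b := by intro h; rw [h] at hav; omega
      have hsub : ({a, b} : Finset (ZMod (m + 1))) ⊆ f := by
        intro x hx
        simp only [Finset.mem_insert, Finset.mem_singleton] at hx
        rcases hx with rfl | rfl
        · exact ha
        · exact hb
      have hcard : ({a, b} : Finset (ZMod (m + 1))).card = 2 := Finset.card_pair hab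
      have hfeq : ({a, b} : Finset (ZMod (m + 1))) = f :=
        Finset.eq_of_subset_of_card_le hsub (by rw [hf.1, hcard])
      rw [← hfeq, haa, hbb]
    
lemma arc_top (hm : 2 ≤ m) (x : ZMod (m + 1)) (hx : ArcBtw (m + 1) (emb m (-1)) 0 x) :
    x.val = m := by
  obtain ⟨h1, h2⟩ := hx
  have hA : (emb m (-1)).val = m - 1 := by rw [emb_val, negOne_val hm]
  have hxn : (x - emb m (-1)).val ≠ 0 := fun h => h1 ((coord_zero _ _).mp h)
  have e0 := valSub (0 : ZMod (m + 1)) (emb m (-1))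
  rw [ZMod.val_zero, hA] at e0
  have e1 := valSub x (emb m (-1))
  rw [hA] at e1
  have hx2 := ZMod.val_lt x
  rcases e0 with ⟨f0, g0⟩ | ⟨f0, g0⟩
  · omega
  · rcases e1 with ⟨f1, g1⟩ | ⟨f1, g1⟩ <;> omega

lemma no_cross_eTop (hm : 2 ≤ m) (f : Finset (ZMod (m + 1)))
    (havoid : ∀ x ∈ f, x.val ≠ m) : ¬ Cross (m + 1) {emb m (-1), 0} f := by
  rintro ⟨a, b, c, d, hE, hf, h1, h2⟩
  have hc : c ∈ f := by rw [hf]; simp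
  have hd : d ∈ f := by rw [hf]; simp
  rcases pair_eq hE with ⟨ha, hb⟩ | ⟨ha, hb⟩
  · rw [← ha, ← hb] at h1
    exact havoid c hc (arc_top hm c h1)
  · rw [← ha, ← hb] at h2
    exact havoid d hd (arc_top hm d h2)

end two

section shift
variable {M : ℕ} [NeZero M]

lemma ne_one_of_val (x : ZMod M) (hM : 2 ≤ M) (h : x.val ≠ 1) : x ≠ 1 := by
  intro hx; rw [hx, one_val_eq hM] at h; exact h rfl

lemma arc_shift (t u v w : ZMod M) :
    ArcBtw M (u + t) (v + t) (w + t) ↔ ArcBtw M u v w := by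
  unfold ArcBtw
  rw [add_sub_add_right_eq_sub, add_sub_add_right_eq_sub, ne_eq, add_left_inj, ← ne_eq]

lemma cross_shift (t : ZMod M) {e f : Finset (ZMod M)} (h : Cross M e f) :
    Cross M (e.image (· + t)) (f.image (· + t)) := by
  obtain ⟨a, b, c, d, he, hf, h1, h2⟩ := h
  exact ⟨a + t, b + t, c + t, d + t, by rw [he, image_pair], by rw [hf, image_pair],
    (arc_shift t _ _ _).mpr h1, (arc_shift t _ _ _).mpr h2⟩

lemma shift_shift (t : ZMod M) (e : Finset (ZMod M)) :
    (e.image (· + t)).image (· + (-t)) = e := by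
  rw [Finset.image_image]
  simp

lemma cross_shift_iff (t : ZMod M) (e f : Finset (ZMod M)) :
    Cross M (e.image (· + t)) (f.image (· + t)) ↔ Cross M e f :=
  ⟨fun h => by have := cross_shift (-t) h; rwa [shift_shift, shift_shift] at this,
   cross_shift t⟩

lemma diag_shift (t : ZMod M) {e : Finset (ZMod M)} (h : IsDiag M e) :
    IsDiag M (e.image (· + t)) := by
  refine ⟨by rw [Finset.card_image_of_injective e (add_left_injective t)]; exact h.1, ?_⟩
  intro a' ha' b' hb'
  obtain ⟨a, ha, rfl⟩ := Finset.mem_image.mp ha'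
  obtain ⟨b, hb, rfl⟩ := Finset.mem_image.mp hb'
  rw [add_sub_add_right_eq_sub]
  exact h.2 a ha b hb

lemma pair_diag (a : ZMod M) (j : ℕ) (hj : 2 ≤ j) (hjM : j + 2 ≤ M) :
    IsDiag M {a, a + (j : ℕ)} := by
  have hMM : 2 ≤ M := by omega
  have hjv : ((j : ℕ) : ZMod M).val = j := ZMod.val_natCast_of_lt (by omega)
  have hj0 : ((j : ℕ) : ZMod M) ≠ 0 := by
    intro h; rw [h, ZMod.val_zero] at hjv; omega
  have hne : a ≠ a + (j : ℕ) := by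
    intro h; exact hj0 (by rw [← add_sub_cancel_left a ((j : ℕ) : ZMod M), ← h, sub_self])
  constructor
  · exact Finset.card_pair hne
  · intro p hp q hq
    simp only [Finset.mem_insert, Finset.mem_singleton] at hp hq
    have hnegv : (-((j : ℕ) : ZMod M)).val = M - j := by
      rw [ZMod.neg_val, if_neg hj0, hjv]
    rcases hp with hp | hp <;> rcases hq with hq | hq <;> rw [hp, hq]
    · exact ne_one_of_val _ hMM (by rw [sub_self, ZMod.val_zero]; omega)
    · exact ne_one_of_val _ hMM (by rw [add_sub_cancel_left, hjv]; omega)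
    · exact ne_one_of_val _ hMM
        (by rw [show a - (a + (j:ℕ)) = -((j:ℕ) : ZMod M) from by ring, hnegv]; omega)
    · exact ne_one_of_val _ hMM (by rw [sub_self, ZMod.val_zero]; omega)

end shift

section reduce
variable {m : ℕ} [NeZero m]

lemma image_emb_down (g : Finset (ZMod m)) : (g.image (emb m)).image (down m) = g := by
  rw [Finset.image_image]
  rw [show g = g.image id from (Finset.image_id).symm, Finset.image_image]
  exact Finset.image_congr (fun x hx => by simp [Function.comp, down_emb])

lemma emb_zero : emb m (0 : ZMod m) = 0 := by
  unfold emb; rw [ZMod.val_zero, Nat.cast_zero]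

lemma reduce (hm : 3 ≤ m) (T2 : Finset (Finset (ZMod (m + 1))))
    (hd : ∀ e ∈ T2, IsDiag (m + 1) e)
    (hnc : ∀ e ∈ T2, ∀ f ∈ T2, ¬ Cross (m + 1) e f)
    (hmax : ∀ e, IsDiag (m + 1) e →
      (∀ f ∈ T2, ¬ Cross (m + 1) e f ∧ ¬ Cross (m + 1) f e) → e ∈ T2)
    (heT : ({emb m (-1), 0} : Finset (ZMod (m + 1))) ∈ T2)
    (hear : ∀ f ∈ T2, ∀ x ∈ f, x.val ≠ m) :
    ∃ T3 : Finset (Finset (ZMod m)),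
      (∀ e ∈ T3, IsDiag m e) ∧
      (∀ e ∈ T3, ∀ f ∈ T3, ¬ Cross m e f) ∧
      (∀ e, IsDiag m e → (∀ f ∈ T3, ¬ Cross m e f ∧ ¬ Cross m f e) → e ∈ T3) ∧
      T3.card + 1 = T2.card := by
  set eT : Finset (ZMod (m + 1)) := {emb m (-1), 0} with heTdef
  set T3 : Finset (Finset (ZMod m)) := (T2.erase eT).image (Finset.image (down m)) with hT3
  have hmem : ∀ g ∈ T3, ∃ f, f ∈ T2 ∧ f ≠ eT ∧ g = f.image (down m) ∧ f = g.image (emb m) := by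
    intro g hg
    obtain ⟨f, hf, rfl⟩ := Finset.mem_image.mp hg
    obtain ⟨hfne, hfT⟩ := Finset.mem_erase.mp hf
    exact ⟨f, hfT, hfne, rfl, (image_down_emb f (hear f hfT)).symm⟩
  refine ⟨T3, ?_, ?_, ?_, ?_⟩
  · intro g hg
    obtain ⟨f, hfT, hfne, rfl, -⟩ := hmem g hg
    exact diag_down (by omega) f (hd f hfT) (hear f hfT) hfne
  · intro g hg g' hg' hcr
    obtain ⟨f, hfT, -, -, hfe⟩ := hmem g hg
    obtain ⟨f', hfT', -, -, hfe'⟩ := hmem g' hg'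
    rw [cross_emb] at hcr
    rw [← hfe, ← hfe'] at hcr
    exact hnc f hfT f' hfT' hcr
  · intro g hgdiag hgcomp
    have hgup : IsDiag (m + 1) (g.image (emb m)) := diag_up (by omega) g hgdiag
    have havoid : ∀ x ∈ g.image (emb m), x.val ≠ m := by
      intro x hx
      obtain ⟨y, -, rfl⟩ := Finset.mem_image.mp hx
      have := emb_val_lt y; omega
    have hcomp2 : ∀ f ∈ T2, ¬ Cross (m + 1) (g.image (emb m)) f ∧
        ¬ Cross (m + 1) f (g.image (emb m)) := by
      intro f hf
      by_cases hfe : f = eT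
      · subst hfe
        have h2 : ¬ Cross (m + 1) eT (g.image (emb m)) :=
          no_cross_eTop (by omega) _ havoid
        exact ⟨fun h => h2 (cross_symm h), h2⟩
      · obtain ⟨hc1, hc2⟩ := hgcomp (f.image (down m))
          (Finset.mem_image_of_mem _ (Finset.mem_erase.mpr ⟨hfe, hf⟩))
        have hfid : (f.image (down m)).image (emb m) = f := image_down_emb f (hear f hf)
        constructor
        · intro h
          rw [← hfid] at h
          exact hc1 ((cross_emb _ _).mpr h)
        · intro h
          rw [← hfid] at h
          exact hc2 ((cross_emb _ _).mpr h)
    have hgT2 : g.image (emb m) ∈ T2 := hmax _ hgup hcomp2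
    have hgne : g.image (emb m) ≠ eT := by
      intro h
      have : g = ({-1, 0} : Finset (ZMod m)) := by
        have h2 : eT = ({-1, 0} : Finset (ZMod m)).image (emb m) := by
          rw [image_pair, emb_zero]
        rw [h2] at h
        exact Finset.image_injective emb_inj h
      have hadj := hgdiag.2 (-1) (by rw [this]; simp) 0 (by rw [this]; simp)
      exact hadj (by ring)
    rw [show g = (g.image (emb m)).image (down m) from (image_emb_down g).symm]
    exact Finset.mem_image_of_mem _ (Finset.mem_erase.mpr ⟨hgne, hgT2⟩)
  · have hinj : Set.InjOn (Finset.image (down m)) (T2.erase eT) := by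
      intro f hf f' hf' h
      have h1 := image_down_emb f (hear f (Finset.mem_erase.mp hf).2)
      have h2 := image_down_emb f' (hear f' (Finset.mem_erase.mp hf').2)
      rw [← h1, ← h2, h]
    rw [hT3, Finset.card_image_of_injOn hinj, Finset.card_erase_of_mem heT]
    have : 1 ≤ T2.card := Finset.card_pos.mpr ⟨eT, heT⟩
    omega

end reduce

lemma main : ∀ n : ℕ, ∀ T : Finset (Finset (ZMod (n + 3))),
    (∀ e ∈ T, IsDiag (n + 3) e) →
    (∀ e ∈ T, ∀ f ∈ T, ¬ Cross (n + 3) e f) →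
    (∀ e, IsDiag (n + 3) e →
      (∀ f ∈ T, ¬ Cross (n + 3) e f ∧ ¬ Cross (n + 3) f e) → e ∈ T) →
    T.card = n := by
  intro n
  induction n with
  | zero =>
    intro T hd _ _
    rw [Finset.card_eq_zero]
    by_contra hne
    obtain ⟨e, he⟩ := Finset.nonempty_iff_ne_empty.mpr hne
    obtain ⟨u, v, huv, hev⟩ := Finset.card_eq_two.mp (hd e he).1
    have h1 := (hd _ he).2 u (by rw [hev]; simp) v (by rw [hev]; simp)
    have h2 := (hd _ he).2 v (by rw [hev]; simp) u (by rw [hev]; simp)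
    have htri : ∀ x : ZMod 3, x = 0 ∨ x = 1 ∨ -x = 1 := by decide
    rcases htri (v - u) with h | h | h
    · exact huv (sub_eq_zero.mp h).symm
    · exact h1 h
    · exact h2 (by rw [← h]; ring)
  | succ k ih =>
    intro T hd hnc hmax
    classical
    haveI : NeZero (k + 1 + 3) := ⟨by omega⟩
    have hMM : 2 ≤ k + 1 + 3 := by omega
    -- T is nonempty
    have hTne : T.Nonempty := by
      rcases Finset.eq_empty_or_nonempty T with rfl | h
      · exfalso
        have hdiag : IsDiag (k + 1 + 3) {0, 0 + ((2 : ℕ) : ZMod (k + 1 + 3))} :=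
          pair_diag 0 2 le_rfl (by omega)
        have := hmax {0, 0 + ((2 : ℕ) : ZMod (k + 1 + 3))} hdiag (fun f hf => by simp at hf)
        simp at this
      · exact h
    obtain ⟨e0, he0⟩ := hTne
    obtain ⟨u, v, huv, hev⟩ := Finset.card_eq_two.mp (hd e0 he0).1
    set P : ℕ → Prop :=
      fun j => ∃ a : ZMod (k + 1 + 3), ({a, a + (j : ℕ)} : Finset (ZMod (k + 1 + 3))) ∈ T
      with hP
    have hPv : P ((v - u).val) := by
      refine ⟨u, ?_⟩
      have hcast : u + ((((v - u).val) : ℕ) : ZMod (k + 1 + 3)) = v := by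
        rw [ZMod.natCast_rightInverse (v - u)]; ring
      rw [hcast, ← hev]; exact he0
    have hex : ∃ j, P j := ⟨_, hPv⟩
    set k0 := Nat.find hex with hk0def
    obtain ⟨a, hea⟩ := Nat.find_spec hex
    rw [← hk0def] at hea
    have hPle : ∀ j, P j → k0 ≤ j := fun j hj => Nat.find_le hj
    have hk0M : k0 < k + 1 + 3 := lt_of_le_of_lt (hPle _ hPv) (ZMod.val_lt (v - u))
    have hk0_2 : 2 ≤ k0 := by
      by_contra hcon
      rcases (by omega : k0 = 0 ∨ k0 = 1) with h0 | h0 <;> rw [h0] at hea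
      · have hc := (hd _ hea).1
        have hpair : ({a, a + ((0 : ℕ) : ZMod (k + 1 + 3))} : Finset (ZMod (k + 1 + 3))) = {a} := by
          simp
        rw [hpair] at hc
        simp at hc
      · have hc := (hd _ hea).2 a (by simp) (a + ((1 : ℕ) : ZMod (k + 1 + 3))) (by simp)
        exact hc (by push_cast; ring)
    set b := a + ((k0 : ℕ) : ZMod (k + 1 + 3)) with hb
    have hDb : (b - a).val = k0 := by
      rw [hb, add_sub_cancel_left, ZMod.val_natCast_of_lt hk0M]
    -- no diagonal of T has an endpoint strictly inside the arc (a, b)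
    have noArc : ∀ x : ZMod (k + 1 + 3), ArcBtw (k + 1 + 3) a b x → ∀ f ∈ T, x ∉ f := by
      intro x hx f hf hxf
      obtain ⟨hxa, hxlt⟩ := hx
      rw [hDb] at hxlt
      have hDx0 : (x - a).val ≠ 0 := fun h => hxa ((coord_zero a x).mp h)
      obtain ⟨p, q, hpq, hfpq⟩ := Finset.card_eq_two.mp (hd f hf).1
      have hxc : ∃ c, c ≠ x ∧ f = {x, c} := by
        rw [hfpq] at hxf
        simp only [Finset.mem_insert, Finset.mem_singleton] at hxf
        rcases hxf with h | h
        · exact ⟨q, by rw [h]; exact fun hh => hpq hh.symm, by rw [hfpq, h]⟩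
        · exact ⟨p, by rw [h]; exact fun hh => hpq hh, by rw [hfpq, h, Finset.pair_comm]⟩
      obtain ⟨c, hcx, hfc⟩ := hxc
      have hgen : ∀ y z : ZMod (k + 1 + 3), f = {y, z} → z ≠ y → k0 ≤ (z - y).val := by
        intro y z hyz hzy
        apply hPle
        refine ⟨y, ?_⟩
        have hcast : y + ((((z - y).val) : ℕ) : ZMod (k + 1 + 3)) = z := by
          rw [ZMod.natCast_rightInverse (z - y)]; ring
        rw [hcast, ← hyz]; exact hf
      have h1 := hgen x c hfc hcx
      have h2 := hgen c x (by rw [hfc, Finset.pair_comm]) (fun h => hcx h.symm)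
      have hcM := ZMod.val_lt (c - a)
      have hxM := ZMod.val_lt (x - a)
      rcases coordSub a c x with ⟨hle, heq⟩ | ⟨hlt, heq⟩
      · -- c further along the arc than x : build a crossing with e
        have hDc : k0 < (c - a).val := by omega
        have hcb : c ≠ b := by
          intro h; rw [h, hDb] at hDc; omega
        have harc2 : ArcBtw (k + 1 + 3) b a c := by
          refine ⟨hcb, ?_⟩
          have e1 := coordSub a c b
          have e2 := coordSub a a b
          rw [coord_self] at e2
          rw [hDb] at e1 e2
          rcases e1 with ⟨f1, g1⟩ | ⟨f1, g1⟩ <;> rcases e2 with ⟨f2, g2⟩ | ⟨f2, g2⟩ <;> omega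
        exact hnc _ hea _ hf
          ⟨a, b, x, c, rfl, hfc, ⟨hxa, by rw [hDb]; exact hxlt⟩, harc2⟩
      · rcases coordSub a x c with ⟨hle2, heq2⟩ | ⟨hlt2, heq2⟩ <;> omega
    -- the minimal arc length is 2
    have hk02 : k0 = 2 := by
      by_contra hne2
      have hk03 : 3 ≤ k0 := by omega
      have hgd : IsDiag (k + 1 + 3) {a, a + ((2 : ℕ) : ZMod (k + 1 + 3))} :=
        pair_diag a 2 le_rfl (by omega)
      have hcomp : ∀ f ∈ T,
          ¬ Cross (k + 1 + 3) {a, a + ((2 : ℕ) : ZMod (k + 1 + 3))} f ∧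
          ¬ Cross (k + 1 + 3) f {a, a + ((2 : ℕ) : ZMod (k + 1 + 3))} := by
        intro f hf
        have key : ∀ y : ZMod (k + 1 + 3),
            ArcBtw (k + 1 + 3) a (a + ((2 : ℕ) : ZMod (k + 1 + 3))) y → y ∉ f := by
          intro y hy
          obtain ⟨hya, hylt⟩ := hy
          rw [add_sub_cancel_left, ZMod.val_natCast_of_lt (by omega)] at hylt
          refine noArc y ⟨hya, ?_⟩ f hf
          rw [hDb]; omega
        have hnc1 : ¬ Cross (k + 1 + 3) ({a, a + ((2 : ℕ) : ZMod (k + 1 + 3))} : Finset _) f := by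
          rintro ⟨p, q, c', d', hgpq, hfcd, h1, h2⟩
          rcases pair_eq hgpq with ⟨hp, hq⟩ | ⟨hp, hq⟩
          · rw [← hp, ← hq] at h1
            exact key c' h1 (by rw [hfcd]; simp)
          · rw [← hp, ← hq] at h2
            exact key d' h2 (by rw [hfcd]; simp)
        exact ⟨hnc1, fun h => hnc1 (cross_symm h)⟩
      have hgT := hmax _ hgd hcomp
      have := hPle 2 ⟨a, hgT⟩
      omega
    -- the vertex a+1 is an ear : not used by any diagonal of T
    have hear0 : ∀ f ∈ T, (a + 1) ∉ f := by
      intro f hf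
      refine noArc (a + 1) ⟨?_, ?_⟩ f hf
      · intro h
        have h1 := add_eq_left.mp h
        have h2 := one_val_eq (m := k + 1 + 3) hMM
        rw [h1, ZMod.val_zero] at h2
        omega
      · rw [add_sub_cancel_left, hDb, one_val_eq hMM]
        omega
    -- translate so that the ear is the top vertex
    set t : ZMod (k + 1 + 3) := -(a + ((2 : ℕ) : ZMod (k + 1 + 3))) with ht
    set T2 := T.image (Finset.image (· + t)) with hT2
    have hcards : T2.card = T.card :=
      Finset.card_image_of_injective T (Finset.image_injective (add_left_injective t))
    have hd2 : ∀ e ∈ T2, IsDiag (k + 1 + 3) e := by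
      intro e he
      obtain ⟨f, hf, rfl⟩ := Finset.mem_image.mp he
      exact diag_shift t (hd f hf)
    have hnc2 : ∀ e ∈ T2, ∀ f ∈ T2, ¬ Cross (k + 1 + 3) e f := by
      intro e he f hf
      obtain ⟨e', he', rfl⟩ := Finset.mem_image.mp he
      obtain ⟨f', hf', rfl⟩ := Finset.mem_image.mp hf
      rw [cross_shift_iff]
      exact hnc e' he' f' hf'
    have hmax2 : ∀ e, IsDiag (k + 1 + 3) e →
        (∀ f ∈ T2, ¬ Cross (k + 1 + 3) e f ∧ ¬ Cross (k + 1 + 3) f e) → e ∈ T2 := by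
      intro e hediag hecomp
      have hdiag' : IsDiag (k + 1 + 3) (e.image (· + (-t))) := diag_shift (-t) hediag
      have hback : (e.image (· + (-t))).image (· + t) = e := by
        have h := shift_shift (-t) e
        rwa [neg_neg] at h
      have hcomp' : ∀ f ∈ T, ¬ Cross (k + 1 + 3) (e.image (· + (-t))) f ∧
          ¬ Cross (k + 1 + 3) f (e.image (· + (-t))) := by
        intro f hf
        obtain ⟨h1, h2⟩ := hecomp (f.image (· + t)) (Finset.mem_image_of_mem _ hf)
        constructor
        · intro hcr
          have h3 := cross_shift t hcr
          rw [hback] at h3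
          exact h1 h3
        · intro hcr
          have h3 := cross_shift t hcr
          rw [hback] at h3
          exact h2 h3
      have := hmax _ hdiag' hcomp'
      rw [← hback]
      exact Finset.mem_image_of_mem _ this
    have h2ne0 : ((2 : ℕ) : ZMod (k + 1 + 3)) ≠ 0 := by
      intro h
      have h2 : ((2 : ℕ) : ZMod (k + 1 + 3)).val = 2 := ZMod.val_natCast_of_lt (by omega)
      rw [h, ZMod.val_zero] at h2
      omega
    have hneg2 : a + t = emb (k + 3) (-1) := by
      apply ZMod.val_injective
      have h3 : a + t = -(((2 : ℕ)) : ZMod (k + 1 + 3)) := by rw [ht]; ring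
      rw [h3, ZMod.neg_val, if_neg h2ne0, ZMod.val_natCast_of_lt (by omega),
        emb_val, negOne_val (by omega)]
      omega
    have hb0 : b + t = 0 := by
      rw [hb, ht, hk02]; ring
    have heT2 : ({emb (k + 3) (-1), 0} : Finset (ZMod (k + 1 + 3))) ∈ T2 := by
      have h := Finset.mem_image_of_mem (Finset.image (· + t)) hea
      rw [show (Finset.image (· + t) {a, a + ((k0 : ℕ) : ZMod (k + 1 + 3))}) =
        {a + t, b + t} from by rw [image_pair, ← hb], hneg2, hb0] at h
      exact h
    have hear2 : ∀ f ∈ T2, ∀ x ∈ f, x.val ≠ k + 3 := by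
      intro f2 hf2 x hx hxval
      obtain ⟨f, hf, rfl⟩ := Finset.mem_image.mp hf2
      obtain ⟨y, hy, rfl⟩ := Finset.mem_image.mp hx
      have hxm : y + t = -1 := by
        apply ZMod.val_injective
        rw [hxval, negOne_val (m := k + 1 + 3) (by omega)]
        omega
      have hya : y = a + 1 := by
        rw [ht] at hxm
        push_cast at hxm
        linear_combination hxm
      exact hear0 f hf (hya ▸ hy)
    obtain ⟨T3, h3d, h3nc, h3max, h3card⟩ :=
      reduce (m := k + 3) (by omega) T2 hd2 hnc2 hmax2 heT2 hear2
    have h3 := ih T3 h3d h3nc h3max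
    omega


/-- Purity: any maximal set of pairwise non-crossing diagonals of a convex
`(n+3)`-gon has exactly `n` elements. -/
theorem stmt14 (n : ℕ) (T : Finset (Finset (ZMod (n + 3))))
    (hd : ∀ e ∈ T, IsDiag (n + 3) e)
    (hnc : ∀ e ∈ T, ∀ f ∈ T, ¬ Cross (n + 3) e f)
    (hmax : ∀ e, IsDiag (n + 3) e →
      (∀ f ∈ T, ¬ Cross (n + 3) e f ∧ ¬ Cross (n + 3) f e) → e ∈ T) :
    T.card = n := by
  exact main n T hd hnc hmax
end

section
/- Every vector γ in ℤ² (the root lattice of type A2) has a unique cluster expansion: a unique way to write γ = Σ m_α α with m_α ∈ ℤ≥0 over the five almost positive roots {−α₁, −α₂, α₁, α₂, α₁+α₂} of type A2, such that m_α m_β = 0 whenever {α,β} is one of the incompatible pairs {−α₁,α₁}, {−α₁,α₁+α₂}, {−α₂,α₂}, {−α₂,α₁+α₂}, {α₁,α₂}. -/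
/-!
The coefficient of `−αᵢ` must be the negative part of the `i`-th coordinate, since `−αᵢ` is
incompatible with every positive root having a nonzero `αᵢ`-coordinate. On the positive side,
`α₁` and `α₂` are incompatible, so `α₁ + α₂` takes up the common positive part `min(x, y)⁺`
and the rest goes to a single simple root.
-/

/-- The five almost positive roots of type A₂:
−α₁, −α₂, α₁, α₂, α₁+α₂ (in this order). -/
def rootsA2 : Fin 5 → ℤ × ℤ := ![(-1, 0), (0, -1), (1, 0), (0, 1), (1, 1)]

namespace RootsA2

/-- The five conditions are the five incompatible pairs {−α₁, α₁}, {−α₁, α₁+α₂}, {−α₂, α₂},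
{−α₂, α₁+α₂}, {α₁, α₂}. -/
def IsCompatible (m : Fin 5 → ℕ) : Prop :=
  m 0 * m 2 = 0 ∧ m 0 * m 4 = 0 ∧ m 1 * m 3 = 0 ∧ m 1 * m 4 = 0 ∧ m 2 * m 3 = 0

def clusterExpansion (x y : ℤ) : Fin 5 → ℕ :=
  ![(-x).toNat, (-y).toNat, (x - max y 0).toNat, (y - max x 0).toNat, (min x y).toNat]

theorem sum_smul_rootsA2 (m : Fin 5 → ℕ) :
    ∑ k, (m k : ℤ) • rootsA2 k = ((m 2 : ℤ) + m 4 - m 0, (m 3 : ℤ) + m 4 - m 1) := by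
  ext <;> simp [Fin.sum_univ_five, rootsA2] <;> ring

theorem isCompatible_clusterExpansion (x y : ℤ) : IsCompatible (clusterExpansion x y) := by
  simp only [IsCompatible, clusterExpansion, Nat.mul_eq_zero, Matrix.cons_val]
  omega

theorem sum_smul_clusterExpansion (x y : ℤ) :
    ∑ k, (clusterExpansion x y k : ℤ) • rootsA2 k = (x, y) := by
  simp only [sum_smul_rootsA2, clusterExpansion, Matrix.cons_val, Prod.mk.injEq]
  omega

theorem eq_clusterExpansion_of_isCompatible {m : Fin 5 → ℕ} {x y : ℤ}
    (hsum : ∑ k, (m k : ℤ) • rootsA2 k = (x, y)) (hm : IsCompatible m) :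
    m = clusterExpansion x y := by
  simp only [sum_smul_rootsA2, Prod.mk.injEq] at hsum
  simp only [IsCompatible, Nat.mul_eq_zero] at hm
  ext i
  fin_cases i <;> simp [clusterExpansion] <;> omega

end RootsA2

theorem stmt16 (γ : ℤ × ℤ) :
    ∃! m : Fin 5 → ℕ,
      (∑ k, (m k : ℤ) • rootsA2 k) = γ ∧
      m 0 * m 2 = 0 ∧ m 0 * m 4 = 0 ∧ m 1 * m 3 = 0 ∧
      m 1 * m 4 = 0 ∧ m 2 * m 3 = 0 := by
  obtain ⟨x, y⟩ := γ
  refine ⟨RootsA2.clusterExpansion x y, ⟨RootsA2.sum_smul_clusterExpansion x y,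
    RootsA2.isCompatible_clusterExpansion x y⟩, ?_⟩
  rintro m ⟨hsum, hm⟩
  exact RootsA2.eq_clusterExpansion_of_isCompatible hsum hm
end

section
/- In type A2, the five two-dimensional cones generated by the compatible pairs (clusters) {−α₁,−α₂}, {−α₁,α₂}, {α₂,α₁+α₂}, {α₁+α₂,α₁}, {α₁,−α₂} form a complete simplicial fan in ℝ²: their interiors are pairwise disjoint and their union is all of ℝ². -/
/-- The closed simplicial cone generated by `v` and `w`. -/
def cone2 (v w : ℝ × ℝ) : Set (ℝ × ℝ) :=
  {p | ∃ s t : ℝ, 0 ≤ s ∧ 0 ≤ t ∧ p = s • v + t • w}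

/-- The interior of the simplicial cone generated by `v` and `w`. -/
def openCone2 (v w : ℝ × ℝ) : Set (ℝ × ℝ) :=
  {p | ∃ s t : ℝ, 0 < s ∧ 0 < t ∧ p = s • v + t • w}

/-- The five clusters of type A₂ (with α₁ = (1,0), α₂ = (0,1)):
{−α₁,−α₂}, {−α₁,α₂}, {α₂,α₁+α₂}, {α₁+α₂,α₁}, {α₁,−α₂}. -/
def clustersA2 : Fin 5 → (ℝ × ℝ) × (ℝ × ℝ) :=
  ![((-1, 0), (0, -1)), ((-1, 0), (0, 1)), ((0, 1), (1, 1)),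
    ((1, 1), (1, 0)), ((1, 0), (0, -1))]

/-! The cones are the two left quadrants, the lower right quadrant, and the two halves of the
upper right quadrant cut by the diagonal, so they cover the plane. The fan property reduces to one
fact, a linear contradiction in each case: no cone meets the interior of another. A point of a cone
that is not in its interior lies on a boundary ray, since one of its coefficients vanishes. -/

theorem openCone2_subset_cone2 (v w : ℝ × ℝ) : openCone2 v w ⊆ cone2 v w :=
  fun _ ⟨s, t, hs, ht, hp⟩ => ⟨s, t, hs.le, ht.le, hp⟩

theorem exists_nonneg_smul_of_mem_cone2_of_notMem_openCone2 {v w p : ℝ × ℝ}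
    (hp : p ∈ cone2 v w) (hp' : p ∉ openCone2 v w) :
    ∃ s : ℝ, 0 ≤ s ∧ (p = s • v ∨ p = s • w) := by
  obtain ⟨s, t, hs, ht, rfl⟩ := hp
  rcases hs.eq_or_lt with rfl | hs
  · exact ⟨t, ht, Or.inr (by simp)⟩
  rcases ht.eq_or_lt with rfl | ht
  · exact ⟨s, hs.le, Or.inl (by simp)⟩
  exact absurd ⟨s, t, hs, ht, rfl⟩ hp'

theorem exists_mem_cone2_clustersA2 (p : ℝ × ℝ) :
    ∃ k : Fin 5, p ∈ cone2 (clustersA2 k).1 (clustersA2 k).2 := by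
  obtain ⟨x, y⟩ := p
  rcases le_total x 0 with hx | hx <;> rcases le_total y 0 with hy | hy
  · exact ⟨0, -x, -y, by linarith, by linarith, by ext <;> simp [clustersA2]⟩
  · exact ⟨1, -x, y, by linarith, hy, by ext <;> simp [clustersA2]⟩
  · exact ⟨4, x, -y, hx, by linarith, by ext <;> simp [clustersA2]⟩
  rcases le_total x y with hxy | hxy
  · exact ⟨2, y - x, x, by linarith, hx, by ext <;> simp [clustersA2]⟩
  · exact ⟨3, y, x - y, hy, by linarith, by ext <;> simp [clustersA2]⟩

theorem notMem_openCone2_clustersA2_of_mem_cone2 {k l : Fin 5} (hkl : k ≠ l) {p : ℝ × ℝ}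
    (hp : p ∈ cone2 (clustersA2 l).1 (clustersA2 l).2) :
    p ∉ openCone2 (clustersA2 k).1 (clustersA2 k).2 := by
  rintro ⟨s, t, hs, ht, rfl⟩
  obtain ⟨s', t', hs', ht', hp⟩ := hp
  obtain ⟨h₁, h₂⟩ := Prod.ext_iff.mp hp
  fin_cases k <;> fin_cases l <;>
    simp only [clustersA2, Fin.zero_eta, Fin.mk_one, Fin.reduceFinMk, Matrix.cons_val,
      Matrix.cons_val_zero, Matrix.cons_val_one, Prod.smul_mk, smul_eq_mul, Prod.mk_add_mk, ne_eq,
      not_true_eq_false] at hkl h₁ h₂ <;>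
    linarith

theorem stmt17 :
    -- the five cones cover ℝ²
    (∀ p : ℝ × ℝ, ∃ k : Fin 5, p ∈ cone2 (clustersA2 k).1 (clustersA2 k).2) ∧
    -- their interiors are pairwise disjoint
    (∀ k l : Fin 5, k ≠ l → ∀ p : ℝ × ℝ,
      p ∈ openCone2 (clustersA2 k).1 (clustersA2 k).2 →
      p ∉ openCone2 (clustersA2 l).1 (clustersA2 l).2) ∧
    -- a point in two cones lies on a boundary ray of each
    (∀ k l : Fin 5, k ≠ l → ∀ p : ℝ × ℝ,
      p ∈ cone2 (clustersA2 k).1 (clustersA2 k).2 →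
      p ∈ cone2 (clustersA2 l).1 (clustersA2 l).2 →
      (∃ s : ℝ, 0 ≤ s ∧ (p = s • (clustersA2 k).1 ∨ p = s • (clustersA2 k).2)) ∧
      (∃ t : ℝ, 0 ≤ t ∧ (p = t • (clustersA2 l).1 ∨ p = t • (clustersA2 l).2))) :=
  ⟨exists_mem_cone2_clustersA2,
    fun _ _ hkl _ hk => notMem_openCone2_clustersA2_of_mem_cone2 hkl.symm
      (openCone2_subset_cone2 _ _ hk),
    fun _ _ hkl _ hk hl =>
      ⟨exists_nonneg_smul_of_mem_cone2_of_notMem_openCone2 hk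
          (notMem_openCone2_clustersA2_of_mem_cone2 hkl hl),
        exists_nonneg_smul_of_mem_cone2_of_notMem_openCone2 hl
          (notMem_openCone2_clustersA2_of_mem_cone2 hkl.symm hk)⟩⟩
end

section
/- For each irreducible finite root system of rank n with exponents e_1,…,e_n and Coxeter number h, the product Π_{i=1}^n (e_i + h + 1)/(e_i + 1) is an integer; in the classical cases it evaluates to: type A_n: (1/(n+2))·binom(2n+2,n+1); types B_n/C_n: binom(2n,n); type D_n: ((3n−2)/n)·binom(2n−2,n−1). -/
/-!
Every product telescopes through `∏_{i=1}^m (i + k) / i = binom(m + k, m)`. For `B_n` the factors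
are `(i + n) / i` after cancelling 2, giving `binom(2n, n)`. For `A_n` the product is the case
`m = k = n + 1` with its first factor `n + 2` removed, i.e. the Catalan number `C_{n+1}`. For `D_n`
it is the `B_{n-1}` product times `(3n - 2) / n`, and `binom(2n - 2, n - 1) / n = C_{n-1}` makes
it the integer `(3n - 2) C_{n-1}`.
-/

open Finset

lemma prod_Icc_one_succ {M : Type*} [CommMonoid M] (f : ℕ → M) (n : ℕ) :
    ∏ i ∈ Icc 1 (n + 1), f i = f 1 * ∏ i ∈ Icc 1 n, f (i + 1) := by
  induction n with
  | zero => simp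
  | succ n ih => rw [prod_Icc_succ_top (by omega), ih, prod_Icc_succ_top (by omega), mul_assoc]

lemma prod_Icc_add_div_eq_choose (m k : ℕ) :
    ∏ i ∈ Icc 1 m, ((i : ℚ) + k) / i = (m + k).choose m := by
  induction m with
  | zero => simp
  | succ m ih =>
    have h : ((m + k + 1 : ℕ) : ℚ) * (m + k).choose m = (m + k + 1).choose (m + 1) * (m + 1 : ℕ) :=
      mod_cast Nat.add_one_mul_choose_eq (m + k) m
    rw [prod_Icc_succ_top (by omega), ih, show m + 1 + k = m + k + 1 by omega]
    push_cast at h ⊢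
    field_simp
    linear_combination h

lemma natCast_catalan (k : ℕ) : (catalan k : ℚ) = (2 * k).choose k / (k + 1) := by
  rw [eq_div_iff (by positivity), ← Nat.centralBinom_eq_two_mul_choose,
    ← succ_mul_catalan_eq_centralBinom]
  push_cast
  ring

lemma prod_typeA (n : ℕ) :
    ∏ i ∈ Icc 1 n, ((i : ℚ) + (n + 1) + 1) / (i + 1) =
      (1 / (n + 2)) * (Nat.choose (2 * n + 2) (n + 1) : ℚ) := by
  have h := prod_Icc_add_div_eq_choose (n + 1) (n + 1)
  rw [prod_Icc_one_succ, show n + 1 + (n + 1) = 2 * n + 2 by ring] at h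
  have hterm : ∀ i ∈ Icc 1 n,
      ((i : ℚ) + (n + 1) + 1) / (i + 1) = (((i + 1 : ℕ) : ℚ) + (n + 1 : ℕ)) / (i + 1 : ℕ) :=
    fun i _ => by push_cast; ring
  rw [prod_congr rfl hterm, ← h]
  push_cast
  field_simp
  ring

lemma one_div_mul_choose_eq_catalan (n : ℕ) :
    (1 / (n + 2)) * (Nat.choose (2 * n + 2) (n + 1) : ℚ) = catalan (n + 1) := by
  rw [natCast_catalan, mul_add_one]
  push_cast
  ring

lemma prod_typeB (n : ℕ) :
    ∏ i ∈ Icc 1 n, ((2 * (i : ℚ) - 1) + 2 * n + 1) / ((2 * (i : ℚ) - 1) + 1) =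
      (2 * n).choose n := by
  rw [two_mul n, ← prod_Icc_add_div_eq_choose]
  refine prod_congr rfl fun i _ => ?_
  rw [show (2 * (i : ℚ) - 1) + 2 * n + 1 = 2 * (i + n) by ring,
    show (2 * (i : ℚ) - 1) + 1 = 2 * i by ring, mul_div_mul_left _ _ two_ne_zero]

lemma prod_typeD (n : ℕ) (hn : 1 ≤ n) :
    (∏ i ∈ Icc 1 (n - 1), ((2 * (i : ℚ) - 1) + (2 * n - 2) + 1) / ((2 * (i : ℚ) - 1) + 1)) *
        (((n : ℚ) - 1 + (2 * n - 2) + 1) / ((n - 1) + 1)) =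
      ((3 * (n : ℚ) - 2) / n) * (Nat.choose (2 * n - 2) (n - 1) : ℚ) := by
  obtain ⟨k, rfl⟩ := Nat.exists_eq_add_of_le' hn
  have hterm : ∀ i ∈ Icc 1 k,
      ((2 * (i : ℚ) - 1) + (2 * ((k + 1 : ℕ) : ℚ) - 2) + 1) / ((2 * (i : ℚ) - 1) + 1) =
        ((2 * (i : ℚ) - 1) + 2 * k + 1) / ((2 * (i : ℚ) - 1) + 1) :=
    fun i _ => by push_cast; ring
  rw [Nat.add_sub_cancel, prod_congr rfl hterm, prod_typeB, show 2 * (k + 1) - 2 = 2 * k by omega]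
  push_cast
  field_simp
  ring

lemma three_mul_sub_two_div_mul_choose_eq_catalan (n : ℕ) (hn : 1 ≤ n) :
    ((3 * (n : ℚ) - 2) / n) * (Nat.choose (2 * n - 2) (n - 1) : ℚ) =
      ((3 * n - 2) * catalan (n - 1) : ℕ) := by
  obtain ⟨k, rfl⟩ := Nat.exists_eq_add_of_le' hn
  rw [Nat.add_sub_cancel, show 2 * (k + 1) - 2 = 2 * k by omega,
    show 3 * (k + 1) - 2 = 3 * k + 1 by omega]
  push_cast
  rw [natCast_catalan]
  field_simp
  ring

theorem stmt19 (n : ℕ) :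
    -- type Aₙ : exponents eᵢ = i, h = n+1
    (1 ≤ n →
      (∏ i ∈ Finset.Icc 1 n, ((i : ℚ) + (n + 1) + 1) / (i + 1)) =
          (1 / (n + 2)) * (Nat.choose (2 * n + 2) (n + 1) : ℚ) ∧
      ∃ m : ℕ, (∏ i ∈ Finset.Icc 1 n, ((i : ℚ) + (n + 1) + 1) / (i + 1)) = m) ∧
    -- types Bₙ, Cₙ : exponents eᵢ = 2i−1, h = 2n
    (1 ≤ n →
      (∏ i ∈ Finset.Icc 1 n, ((2 * (i : ℚ) - 1) + 2 * n + 1) / ((2 * (i : ℚ) - 1) + 1)) =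
          (Nat.choose (2 * n) n : ℚ) ∧
      ∃ m : ℕ,
        (∏ i ∈ Finset.Icc 1 n, ((2 * (i : ℚ) - 1) + 2 * n + 1) / ((2 * (i : ℚ) - 1) + 1)) = m) ∧
    -- type Dₙ : exponents 1, 3, …, 2n−3 together with n−1, h = 2n−2
    (2 ≤ n →
      ((∏ i ∈ Finset.Icc 1 (n - 1),
          ((2 * (i : ℚ) - 1) + (2 * n - 2) + 1) / ((2 * (i : ℚ) - 1) + 1)) *
        (((n : ℚ) - 1 + (2 * n - 2) + 1) / ((n - 1) + 1))) =
          ((3 * (n : ℚ) - 2) / n) * (Nat.choose (2 * n - 2) (n - 1) : ℚ) ∧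
      ∃ m : ℕ,
        ((∏ i ∈ Finset.Icc 1 (n - 1),
            ((2 * (i : ℚ) - 1) + (2 * n - 2) + 1) / ((2 * (i : ℚ) - 1) + 1)) *
          (((n : ℚ) - 1 + (2 * n - 2) + 1) / ((n - 1) + 1))) = m) := by
  refine ⟨fun _ => ⟨prod_typeA n, _, (prod_typeA n).trans (one_div_mul_choose_eq_catalan n)⟩,
    fun _ => ⟨prod_typeB n, _, prod_typeB n⟩, fun hn => ?_⟩
  have hD := prod_typeD n (by omega)
  exact ⟨hD, _, hD.trans (three_mul_sub_two_div_mul_choose_eq_catalan n (by omega))⟩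
end
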